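/- arXiv:1412.6830 — 3 statements merged into one kernel-verified Lean document; each statement's English description precedes it below -/
import Mathlib

section
/- Any continuous piecewise-linear function g : ℝ → ℝ that equals the identity (g(x) = x) for all x ≥ u (for some u) and has constant slope α for all x < v (for some v) can be written in the form g(x) = max(0,x) + Σ_{s=1}^{S} a_s · max(0, -x + b_s) for some natural number S and real parameters a_s, b_s. -/
/-!
Subtracting the identity turns `g` into a piecewise-affine function `h` that vanishes to the
right of the last breakpoint (there the affine piece of `g` agrees with the identity on a
half-line, hence is the identity). Such an `h` is a combination of hinges
`x ↦ max 0 (b - x)`: adding a suitable multiple of the hinge at the leftmost breakpoint removes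
the kink there without changing `h` further right, and induction on the number of breakpoints
finishes. Finally `x = max 0 x - max 0 (-x)`.
-/

open Set

def hinge (b : ℝ) (x : ℝ) : ℝ := max 0 (-x + b)

def hingeSpan : Submodule ℝ (ℝ → ℝ) := Submodule.span ℝ (range hinge)

def IsAffineOn (f : ℝ → ℝ) (s : Set ℝ) : Prop := ∃ m q : ℝ, ∀ x ∈ s, f x = m * x + q

lemma hinge_of_le {b x : ℝ} (hx : x ≤ b) : hinge b x = b - x := by
  rw [hinge, max_eq_right (by linarith)]; ring

lemma hinge_of_ge {b x : ℝ} (hx : b ≤ x) : hinge b x = 0 :=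
  max_eq_left (by linarith)

lemma hinge_mem_hingeSpan (b : ℝ) : hinge b ∈ hingeSpan :=
  Submodule.subset_span (mem_range_self b)

lemma exists_sum_hinge_of_mem_hingeSpan {f : ℝ → ℝ} (hf : f ∈ hingeSpan) :
    ∃ (S : ℕ) (a b : Fin S → ℝ), ∀ x, f x = ∑ s, a s * max 0 (-x + b s) := by
  obtain ⟨S, a, φ, rfl⟩ := Submodule.mem_span_set'.mp hf
  choose b hb using fun s => (φ s).2
  refine ⟨S, a, b, fun x => ?_⟩
  simp [← hb, hinge]

lemma IsAffineOn.sub_id {f : ℝ → ℝ} {s : Set ℝ} (hf : IsAffineOn f s) :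
    IsAffineOn (fun x => f x - x) s := by
  obtain ⟨m, q, h⟩ := hf
  exact ⟨m - 1, q, fun x hx => by simp only [h x hx]; ring⟩

lemma IsAffineOn.eqOn_id_Ici {f : ℝ → ℝ} {a u : ℝ} (hf : IsAffineOn f (Ici a))
    (hu : EqOn f id (Ici u)) : EqOn f id (Ici a) := by
  obtain ⟨m, q, h⟩ := hf
  have hw := le_max_left a u
  have hw' := le_max_right a u
  have h₀ : m * max a u + q = max a u := (h _ hw).symm.trans (hu hw')
  have h₁ : m * (max a u + 1) + q = max a u + 1 :=
    (h _ (by simp only [mem_Ici]; linarith)).symm.trans (hu (by simp only [mem_Ici]; linarith))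
  have hm : m = 1 := by linarith
  have hq : q = 0 := by subst hm; linarith
  intro x hx
  simp [h x hx, hm, hq]

lemma mem_hingeSpan_of_isAffineOn_Iic {h : ℝ → ℝ} {c : ℝ} (hleft : IsAffineOn h (Iic c))
    (hright : EqOn h 0 (Ici c)) : h ∈ hingeSpan := by
  obtain ⟨m, q, hmq⟩ := hleft
  have hc : m * c + q = 0 := (hmq c self_mem_Iic).symm.trans (hright self_mem_Ici)
  have : h = (-m) • hinge c := by
    funext x
    rcases le_total x c with hx | hx
    · simp only [Pi.smul_apply, smul_eq_mul, hmq x hx, hinge_of_le hx]; linarith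
    · simp [hright hx, hinge_of_ge hx]
  exact this ▸ Submodule.smul_mem _ _ (hinge_mem_hingeSpan c)

lemma exists_isAffineOn_add_smul_hinge {h : ℝ → ℝ} {c d : ℝ} (hcd : c ≤ d)
    (hleft : IsAffineOn h (Iic c)) (hmid : IsAffineOn h (Icc c d)) :
    ∃ r : ℝ, IsAffineOn (h + r • hinge c) (Iic d) := by
  obtain ⟨m, q, hmq⟩ := hleft
  obtain ⟨m', q', hmq'⟩ := hmid
  have hc : m * c + q = m' * c + q' :=
    (hmq c self_mem_Iic).symm.trans (hmq' c (left_mem_Icc.mpr hcd))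
  refine ⟨m - m', m', q', fun x hx => ?_⟩
  simp only [Pi.add_apply, Pi.smul_apply, smul_eq_mul]
  rcases le_total x c with hxc | hcx
  · rw [hmq x hxc, hinge_of_le hxc]; linarith
  · rw [hmq' x ⟨hcx, hx⟩, hinge_of_ge hcx]; ring

lemma add_smul_hinge_eqOn_Ici (h : ℝ → ℝ) (r c : ℝ) : EqOn (h + r • hinge c) h (Ici c) := by
  intro x hx
  simp [hinge_of_ge (mem_Ici.mp hx)]

theorem mem_hingeSpan_of_piecewise_affine {n : ℕ} {t : Fin (n + 1) → ℝ} (ht : Monotone t)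
    {h : ℝ → ℝ} (hleft : IsAffineOn h (Iic (t 0)))
    (hpieces : ∀ i : Fin n, IsAffineOn h (Icc (t i.castSucc) (t i.succ)))
    (hright : EqOn h 0 (Ici (t (Fin.last n)))) : h ∈ hingeSpan := by
  induction n generalizing h with
  | zero => exact mem_hingeSpan_of_isAffineOn_Iic hleft hright
  | succ n ih =>
    obtain ⟨r, hr⟩ := exists_isAffineOn_add_smul_hinge (ht (Fin.zero_le 1)) hleft (hpieces 0)
    have hagree : ∀ i, EqOn (h + r • hinge (t 0)) h (Ici (t i)) := fun i =>
      (add_smul_hinge_eqOn_Ici h r (t 0)).mono (Ici_subset_Ici.mpr (ht (Fin.zero_le i)))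
    have htail : h + r • hinge (t 0) ∈ hingeSpan := by
      refine ih (t := Fin.tail t) (fun i j hij => ht (Fin.succ_le_succ_iff.mpr hij)) hr
        (fun i => ?_) ((hagree _).trans hright)
      obtain ⟨m, q, hmq⟩ := hpieces i.succ
      refine ⟨m, q, fun x hx => ?_⟩
      simp only [Fin.tail] at hx
      rw [hagree _ hx.1, hmq x hx]
    simpa using sub_mem htail (Submodule.smul_mem _ r (hinge_mem_hingeSpan (t 0)))

theorem apl_universality_general (g : ℝ → ℝ)
    (hpl : ∃ (n : ℕ) (t : Fin (n+1) → ℝ), StrictMono t ∧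
      (∀ i : Fin n, ∃ m q : ℝ, ∀ x ∈ Set.Icc (t i.castSucc) (t i.succ), g x = m * x + q) ∧
      (∃ m q : ℝ, ∀ x ≤ t 0, g x = m * x + q) ∧
      (∃ m q : ℝ, ∀ x, t (Fin.last n) ≤ x → g x = m * x + q))
    (u : ℝ) (hu : ∀ x, u ≤ x → g x = x) :
    ∃ (S : ℕ) (a b : Fin S → ℝ),
      ∀ x, g x = max 0 x + ∑ s, a s * max 0 (-x + b s) := by
  obtain ⟨n, t, ht, hpieces, hleft, hlast⟩ := hpl
  have hid : EqOn g id (Ici (t (Fin.last n))) := IsAffineOn.eqOn_id_Ici hlast hu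
  have hsub : (fun x => g x - x) ∈ hingeSpan :=
    mem_hingeSpan_of_piecewise_affine ht.monotone (IsAffineOn.sub_id hleft)
      (fun i => IsAffineOn.sub_id (hpieces i)) fun x hx => by simp [hid hx]
  obtain ⟨S, a, b, hsum⟩ :=
    exists_sum_hinge_of_mem_hingeSpan (sub_mem hsub (hinge_mem_hingeSpan 0))
  refine ⟨S, a, b, fun x => ?_⟩
  have hx : x = max 0 x - hinge 0 x := by simp [hinge, max_comm]
  have hgx := hsum x
  simp only [Pi.sub_apply] at hgx
  linarith

/-- universality of the APL form for continuous piecewise-linear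
functions that equal the identity on the right and have constant slope on the left. -/
theorem apl_universality (g : ℝ → ℝ) (hc : Continuous g)
    (hpl : ∃ (n : ℕ) (t : Fin (n+1) → ℝ), StrictMono t ∧
      (∀ i : Fin n, ∃ m q : ℝ, ∀ x ∈ Set.Icc (t i.castSucc) (t i.succ), g x = m * x + q) ∧
      (∃ m q : ℝ, ∀ x ≤ t 0, g x = m * x + q) ∧
      (∃ m q : ℝ, ∀ x, t (Fin.last n) ≤ x → g x = m * x + q))
    (u : ℝ) (hu : ∀ x, u ≤ x → g x = x)
    (v α : ℝ) (hv : ∀ x < v, HasDerivAt g α x) :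
    ∃ (S : ℕ) (a b : Fin S → ℝ),
      ∀ x, g x = max 0 x + ∑ s, a s * max 0 (-x + b s) :=
  apl_universality_general g hpl u hu
end

section
/- Any continuous piecewise-linear function g : ℝ → ℝ with finitely many pieces can be written as the difference of two convex functions, each a pointwise maximum of finitely many affine functions (i.e., as the difference of two maxout units of a single real variable). -/
/-!
Subtracting `(m' - m) * max (x - T) 0`, where `m` and `m'` are the slopes of `g` left and right
of its last breakpoint `T`, removes that breakpoint without changing `g` left of `T`; after
finitely many steps an affine function remains. Each such term is a maxout or the negative of
one, according to the sign of `m' - m`, and differences of maxouts are closed under sums and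
negation because maxouts are closed under sums.
-/

open Finset Set

def IsMaxout (f : ℝ → ℝ) : Prop :=
  ∃ (N : ℕ) (w c : Fin (N + 1) → ℝ), ∀ x, f x = univ.sup' univ_nonempty fun k => w k * x + c k

def IsDiffMaxout (g : ℝ → ℝ) : Prop :=
  ∃ f₁ f₂ : ℝ → ℝ, IsMaxout f₁ ∧ IsMaxout f₂ ∧ g = f₁ - f₂

theorem isMaxout_of_fintype {ι : Type*} [Fintype ι] [Nonempty ι] {f : ℝ → ℝ} (w c : ι → ℝ)
    (hf : ∀ x, f x = univ.sup' univ_nonempty fun k => w k * x + c k) : IsMaxout f := by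
  have hcard : Fintype.card ι = Fintype.card ι - 1 + 1 :=
    (Nat.succ_pred_eq_of_pos Fintype.card_pos).symm
  let e : ι ≃ Fin (Fintype.card ι - 1 + 1) := (Fintype.equivFin ι).trans (finCongr hcard)
  refine ⟨_, w ∘ e.symm, c ∘ e.symm, fun x => (hf x).trans ?_⟩
  exact eq_of_forall_ge_iff fun a => by simp [e.forall_congr_left]

theorem isMaxout_affine (m q : ℝ) : IsMaxout fun x => m * x + q :=
  ⟨0, fun _ => m, fun _ => q, fun x => by simp⟩

theorem IsMaxout.add {f g : ℝ → ℝ} (hf : IsMaxout f) (hg : IsMaxout g) : IsMaxout (f + g) := by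
  obtain ⟨N, w, c, hf⟩ := hf
  obtain ⟨M, v, d, hg⟩ := hg
  refine isMaxout_of_fintype (fun k : Fin _ × Fin _ => w k.1 + v k.2)
    (fun k => c k.1 + d k.2) fun x => ?_
  rw [Pi.add_apply, hf, hg, ← sup'_congr (univ_nonempty.product univ_nonempty) univ_product_univ
    fun _ _ => rfl, sup'_product_left, sup'_add]
  refine sup'_congr _ rfl fun i _ => ?_
  rw [add_sup']
  exact sup'_congr _ rfl fun j _ => by ring

theorem IsMaxout.sup {f g : ℝ → ℝ} (hf : IsMaxout f) (hg : IsMaxout g) : IsMaxout (f ⊔ g) := by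
  obtain ⟨N, w, c, hf⟩ := hf
  obtain ⟨M, v, d, hg⟩ := hg
  refine isMaxout_of_fintype (Sum.elim w v) (Sum.elim c d) fun x => ?_
  rw [Pi.sup_apply, hf, hg]
  exact eq_of_forall_ge_iff fun a => by simp

theorem IsMaxout.isDiffMaxout {f : ℝ → ℝ} (hf : IsMaxout f) : IsDiffMaxout f :=
  ⟨f, fun x => 0 * x + 0, hf, isMaxout_affine 0 0, by ext; simp⟩

theorem IsDiffMaxout.add {f g : ℝ → ℝ} (hf : IsDiffMaxout f) (hg : IsDiffMaxout g) :
    IsDiffMaxout (f + g) := by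
  obtain ⟨f₁, f₂, hf₁, hf₂, rfl⟩ := hf
  obtain ⟨g₁, g₂, hg₁, hg₂, rfl⟩ := hg
  exact ⟨f₁ + g₁, f₂ + g₂, hf₁.add hg₁, hf₂.add hg₂, by abel⟩

theorem IsDiffMaxout.neg {f : ℝ → ℝ} (hf : IsDiffMaxout f) : IsDiffMaxout (-f) := by
  obtain ⟨f₁, f₂, hf₁, hf₂, rfl⟩ := hf
  exact ⟨f₂, f₁, hf₂, hf₁, by abel⟩

theorem isMaxout_mul_max_sub_zero {δ : ℝ} (hδ : 0 ≤ δ) (T : ℝ) :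
    IsMaxout fun x => δ * max (x - T) 0 := by
  convert (isMaxout_affine δ (-(δ * T))).sup (isMaxout_affine 0 0) using 1
  ext x
  rw [Pi.sup_apply, mul_max_of_nonneg _ _ hδ]
  ring_nf

theorem isDiffMaxout_mul_max_sub_zero (δ T : ℝ) : IsDiffMaxout fun x => δ * max (x - T) 0 := by
  rcases le_total 0 δ with hδ | hδ
  · exact (isMaxout_mul_max_sub_zero hδ T).isDiffMaxout
  · convert (isMaxout_mul_max_sub_zero (neg_nonneg.2 hδ) T).isDiffMaxout.neg using 1
    ext x
    simp

theorem IsDiffMaxout.of_sub_mul_max_sub_zero {g : ℝ → ℝ} (δ T : ℝ)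
    (hg : IsDiffMaxout fun x => g x - δ * max (x - T) 0) : IsDiffMaxout g := by
  convert hg.add (isDiffMaxout_mul_max_sub_zero δ T) using 1
  ext x
  simp

theorem mul_max_sub_zero_of_le {x T : ℝ} (δ : ℝ) (hx : x ≤ T) : δ * max (x - T) 0 = 0 := by
  rw [max_eq_right (sub_nonpos.2 hx), mul_zero]

theorem eqOn_sub_mul_max_sub_zero {g : ℝ → ℝ} {s : Set ℝ} {m q m' q' T : ℝ}
    (hs : EqOn g (fun x => m * x + q) s) (hT : T ∈ s)
    (hR : EqOn g (fun x => m' * x + q') (Ici T)) :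
    EqOn (fun x => g x - (m' - m) * max (x - T) 0) (fun x => m * x + q) (s ∪ Ici T) := by
  have hTT : m * T + q = m' * T + q' := (hs hT).symm.trans (hR self_mem_Ici)
  intro x hx
  dsimp only
  rcases lt_or_ge x T with hxT | hxT
  · rw [mul_max_sub_zero_of_le _ hxT.le, sub_zero]
    exact hs (hx.resolve_right (not_le.2 hxT))
  · rw [hR hxT, max_eq_left (sub_nonneg.2 hxT)]
    linear_combination -hTT

theorem IsDiffMaxout.of_piecewise_affine : ∀ {n : ℕ} {t : Fin (n + 1) → ℝ} {g : ℝ → ℝ},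
    Monotone t →
    (∀ i : Fin n, ∃ m q : ℝ, ∀ x ∈ Icc (t i.castSucc) (t i.succ), g x = m * x + q) →
    (∃ m q : ℝ, ∀ x ≤ t 0, g x = m * x + q) →
    (∃ m q : ℝ, ∀ x, t (Fin.last n) ≤ x → g x = m * x + q) →
    IsDiffMaxout g
  | 0, t, g, _, _, ⟨m, q, hL⟩, ⟨m', q', hR⟩ => by
    refine .of_sub_mul_max_sub_zero (m' - m) (t 0) ?_
    convert (isMaxout_affine m q).isDiffMaxout using 1
    ext x
    exact eqOn_sub_mul_max_sub_zero (s := Iic (t 0)) hL self_mem_Iic hR (by simp)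
  | n + 1, t, g, ht, hI, hL, ⟨m', q', hR⟩ => by
    obtain ⟨m, q, hlast⟩ := hI (Fin.last n)
    set T := t (Fin.last (n + 1))
    have hle : ∀ i, t i ≤ T := fun i => ht (Fin.le_last i)
    refine .of_sub_mul_max_sub_zero (m' - m) T ?_
    have hleft : ∀ x ≤ T, g x - (m' - m) * max (x - T) 0 = g x := fun x hx => by
      rw [mul_max_sub_zero_of_le _ hx, sub_zero]
    refine of_piecewise_affine (t := t ∘ Fin.castSucc) (ht.comp Fin.strictMono_castSucc.monotone)
      (fun i => ?_) ?_ ⟨m, q, fun x hx => ?_⟩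
    · obtain ⟨mi, qi, hi⟩ := hI i.castSucc
      refine ⟨mi, qi, fun x hx => ?_⟩
      have hx' : x ∈ Icc (t i.castSucc.castSucc) (t i.castSucc.succ) := by
        rwa [Fin.succ_castSucc]
      rw [hleft x (hx.2.trans (hle _)), hi x hx']
    · obtain ⟨ml, ql, hl⟩ := hL
      exact ⟨ml, ql, fun x hx => by rw [hleft x (hx.trans (hle _)), hl x hx]⟩
    · exact eqOn_sub_mul_max_sub_zero hlast (right_mem_Icc.2 (hle _)) hR
        (Or.imp_left (fun hxT => ⟨hx, hxT⟩) (le_total x T))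

theorem pl_eq_diff_of_maxouts_general (g : ℝ → ℝ)
    (hpl : ∃ (n : ℕ) (t : Fin (n+1) → ℝ), StrictMono t ∧
      (∀ i : Fin n, ∃ m q : ℝ, ∀ x ∈ Set.Icc (t i.castSucc) (t i.succ), g x = m * x + q) ∧
      (∃ m q : ℝ, ∀ x ≤ t 0, g x = m * x + q) ∧
      (∃ m q : ℝ, ∀ x, t (Fin.last n) ≤ x → g x = m * x + q)) :
    ∃ (N₁ N₂ : ℕ) (w₁ c₁ : Fin (N₁+1) → ℝ) (w₂ c₂ : Fin (N₂+1) → ℝ),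
      ∀ x, g x =
        Finset.univ.sup' ⟨0, Finset.mem_univ _⟩ (fun k => w₁ k * x + c₁ k : Fin (N₁+1) → ℝ) -
        Finset.univ.sup' ⟨0, Finset.mem_univ _⟩ (fun k => w₂ k * x + c₂ k : Fin (N₂+1) → ℝ) := by
  obtain ⟨n, t, ht, hI, hL, hR⟩ := hpl
  obtain ⟨f₁, f₂, ⟨N₁, w₁, c₁, hf₁⟩, ⟨N₂, w₂, c₂, hf₂⟩, rfl⟩ :=
    IsDiffMaxout.of_piecewise_affine ht.monotone hI hL hR
  exact ⟨N₁, N₂, w₁, c₁, w₂, c₂, fun x => by rw [Pi.sub_apply, hf₁, hf₂]⟩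

/-- any continuous piecewise-linear function on ℝ is a difference of two
maxout units (pointwise maxima of finitely many affine functions). -/
theorem pl_eq_diff_of_maxouts (g : ℝ → ℝ) (hc : Continuous g)
    (hpl : ∃ (n : ℕ) (t : Fin (n+1) → ℝ), StrictMono t ∧
      (∀ i : Fin n, ∃ m q : ℝ, ∀ x ∈ Set.Icc (t i.castSucc) (t i.succ), g x = m * x + q) ∧
      (∃ m q : ℝ, ∀ x ≤ t 0, g x = m * x + q) ∧
      (∃ m q : ℝ, ∀ x, t (Fin.last n) ≤ x → g x = m * x + q)) :
    ∃ (N₁ N₂ : ℕ) (w₁ c₁ : Fin (N₁+1) → ℝ) (w₂ c₂ : Fin (N₂+1) → ℝ),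
      ∀ x, g x =
        Finset.univ.sup' ⟨0, Finset.mem_univ _⟩ (fun k => w₁ k * x + c₁ k : Fin (N₁+1) → ℝ) -
        Finset.univ.sup' ⟨0, Finset.mem_univ _⟩ (fun k => w₂ k * x + c₂ k : Fin (N₂+1) → ℝ) :=
  pl_eq_diff_of_maxouts_general g hpl
end

section
/- If g is a continuous piecewise-linear function with boundary points b^0 < b^1 < ... < b^K, slope a^k on the k-th bounded interval (b^{k-1}, b^k), slope a^0 on (-∞, b^0), and g(x) = x for x ≥ b^K, then g equals the explicit construction h(x) = -a^0 max(0,-x+b^0) + Σ_{k=1}^K a^k (max(0,-x+b^{k-1}) - max(0,-x+b^k)) - max(0,-x) + max(0,x) + max(0,-x+b^K). -/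
/-!
Both `g` and the construction `h` have slope `a^k` on the `k`-th piece: on a piece every hinge
`max 0 (-x + t)` is either `0` or `t - x`, so each window `max 0 (-x + b^{j-1}) - max 0 (-x + b^j)`
has slope `1` on the `j`-th piece and `0` elsewhere. Two functions with the same slope on an
interval agree there as soon as they agree at one point, and consecutive pieces share an endpoint,
so agreement with `g(x) = x` on `[b^K, ∞)` propagates leftwards piece by piece.
-/

open Set Finset

def HasSlopeOn (f : ℝ → ℝ) (c : ℝ) (s : Set ℝ) : Prop :=
  ∀ x ∈ s, ∀ y ∈ s, f x - f y = c * (x - y)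

namespace HasSlopeOn

variable {f g : ℝ → ℝ} {c d q : ℝ} {s : Set ℝ}

lemma of_eqOn_affine (h : ∀ x ∈ s, f x = c * x + q) : HasSlopeOn f c s := by
  intro x hx y hy
  rw [h x hx, h y hy]
  ring

lemma add (hf : HasSlopeOn f c s) (hg : HasSlopeOn g d s) :
    HasSlopeOn (fun x => f x + g x) (c + d) s := by
  intro x hx y hy
  linear_combination hf x hx y hy + hg x hx y hy

lemma sub (hf : HasSlopeOn f c s) (hg : HasSlopeOn g d s) :
    HasSlopeOn (fun x => f x - g x) (c - d) s := by
  intro x hx y hy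
  linear_combination hf x hx y hy - hg x hx y hy

lemma const_mul (hf : HasSlopeOn f c s) (r : ℝ) : HasSlopeOn (fun x => r * f x) (r * c) s := by
  intro x hx y hy
  linear_combination r * hf x hx y hy

lemma sum {ι : Type*} (t : Finset ι) {f : ι → ℝ → ℝ} {c : ι → ℝ}
    (h : ∀ i ∈ t, HasSlopeOn (f i) (c i) s) :
    HasSlopeOn (fun x => ∑ i ∈ t, f i x) (∑ i ∈ t, c i) s := by
  intro x hx y hy
  rw [← Finset.sum_sub_distrib, Finset.sum_mul]
  exact Finset.sum_congr rfl fun i hi => h i hi x hx y hy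

lemma eqOn (hf : HasSlopeOn f c s) (hg : HasSlopeOn g c s) {y : ℝ} (hy : y ∈ s)
    (hfg : f y = g y) : EqOn f g s := by
  intro x hx
  linear_combination hf x hx y hy - hg x hx y hy + hfg

end HasSlopeOn

section Hinge

variable {s : Set ℝ} {t u v : ℝ}

lemma hasSlopeOn_id (s : Set ℝ) : HasSlopeOn (fun x => x) 1 s :=
  HasSlopeOn.of_eqOn_affine (q := 0) fun x _ => by ring

lemma hasSlopeOn_hinge_of_subset_Iic (hs : s ⊆ Iic t) :
    HasSlopeOn (fun x => max 0 (-x + t)) (-1) s :=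
  HasSlopeOn.of_eqOn_affine (q := t) fun x hx => by
    rw [max_eq_right (by linarith [mem_Iic.1 (hs hx)])]
    ring

lemma hasSlopeOn_hinge_of_subset_Ici (hs : s ⊆ Ici t) :
    HasSlopeOn (fun x => max 0 (-x + t)) 0 s :=
  HasSlopeOn.of_eqOn_affine (q := 0) fun x hx => by
    rw [max_eq_left (by linarith [mem_Ici.1 (hs hx)])]
    ring

lemma hasSlopeOn_window_of_subset_Iic (huv : u ≤ v) (hs : s ⊆ Iic u) :
    HasSlopeOn (fun x => max 0 (-x + u) - max 0 (-x + v)) 0 s := by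
  simpa using (hasSlopeOn_hinge_of_subset_Iic hs).sub
    (hasSlopeOn_hinge_of_subset_Iic (hs.trans (Iic_subset_Iic.2 huv)))

lemma hasSlopeOn_window_of_subset_Icc (hs : s ⊆ Icc u v) :
    HasSlopeOn (fun x => max 0 (-x + u) - max 0 (-x + v)) 1 s := by
  simpa using (hasSlopeOn_hinge_of_subset_Ici (hs.trans Icc_subset_Ici_self)).sub
    (hasSlopeOn_hinge_of_subset_Iic (hs.trans Icc_subset_Iic_self))

lemma hasSlopeOn_window_of_subset_Ici (huv : u ≤ v) (hs : s ⊆ Ici v) :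
    HasSlopeOn (fun x => max 0 (-x + u) - max 0 (-x + v)) 0 s := by
  simpa using (hasSlopeOn_hinge_of_subset_Ici (hs.trans (Ici_subset_Ici.2 huv))).sub
    (hasSlopeOn_hinge_of_subset_Ici hs)

lemma max_zero_sub_max_zero_neg (x : ℝ) : max 0 x - max 0 (-x) = x := by
  rcases le_total 0 x with h | h
  · rw [max_eq_right h, max_eq_left (neg_nonpos.2 h), sub_zero]
  · rw [max_eq_left h, max_eq_right (neg_nonneg.2 h)]
    ring

end Hinge

/-- The function `h` of Equation (2). -/
noncomputable def aplConstruction (K : ℕ) (b a : Fin (K+1) → ℝ) (x : ℝ) : ℝ :=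
  -(a 0) * max 0 (-x + b 0) +
    (∑ k : Fin K, a k.succ * (max 0 (-x + b k.castSucc) - max 0 (-x + b k.succ))) -
    max 0 (-x) + max 0 x + max 0 (-x + b (Fin.last K))

namespace aplConstruction

variable {K : ℕ} {b : Fin (K+1) → ℝ} (a : Fin (K+1) → ℝ)

lemma eq_hinges (x : ℝ) :
    aplConstruction K b a x =
      -(a 0) * max 0 (-x + b 0) +
        (∑ k : Fin K, a k.succ * (max 0 (-x + b k.castSucc) - max 0 (-x + b k.succ))) +
        x + max 0 (-x + b (Fin.last K)) := by
  rw [aplConstruction]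
  linear_combination max_zero_sub_max_zero_neg x

lemma hasSlopeOn_of_hinge_slopes {s : Set ℝ} {c₀ c₁ S : ℝ}
    (h₀ : HasSlopeOn (fun x => max 0 (-x + b 0)) c₀ s)
    (hsum : HasSlopeOn
      (fun x => ∑ k : Fin K, a k.succ * (max 0 (-x + b k.castSucc) - max 0 (-x + b k.succ))) S s)
    (h₁ : HasSlopeOn (fun x => max 0 (-x + b (Fin.last K))) c₁ s) :
    HasSlopeOn (aplConstruction K b a) (-(a 0) * c₀ + S + 1 + c₁) s := by
  have := (((h₀.const_mul (-(a 0))).add hsum).add (hasSlopeOn_id s)).add h₁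
  simpa only [funext (eq_hinges a)] using this

lemma eq_self_of_le (hb : Monotone b) {x : ℝ} (hx : b (Fin.last K) ≤ x) :
    aplConstruction K b a x = x := by
  have hinge_eq_zero : ∀ i, max 0 (-x + b i) = 0 := fun i =>
    max_eq_left (by linarith [hb (Fin.le_last i)])
  simp [eq_hinges, hinge_eq_zero]

lemma hasSlopeOn_Iic (hb : Monotone b) :
    HasSlopeOn (aplConstruction K b a) (a 0) (Iic (b 0)) := by
  have hsub : ∀ i, Iic (b 0) ⊆ Iic (b i) := fun i => Iic_subset_Iic.2 (hb (Fin.zero_le i))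
  have hsum := HasSlopeOn.sum Finset.univ fun (k : Fin K) _ =>
    (hasSlopeOn_window_of_subset_Iic (hb (Fin.castSucc_le_succ k)) (hsub _)).const_mul
      (a k.succ)
  simpa using hasSlopeOn_of_hinge_slopes a (hasSlopeOn_hinge_of_subset_Iic subset_rfl) hsum
    (hasSlopeOn_hinge_of_subset_Iic (hsub _))

lemma hasSlopeOn_Icc (hb : Monotone b) (k : Fin K) :
    HasSlopeOn (aplConstruction K b a) (a k.succ) (Icc (b k.castSucc) (b k.succ)) := by
  set s := Icc (b k.castSucc) (b k.succ)
  have window : ∀ j : Fin K, HasSlopeOn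
      (fun x => a j.succ * (max 0 (-x + b j.castSucc) - max 0 (-x + b j.succ)))
      (if k = j then a k.succ else 0) s := by
    intro j
    have hj := hb (Fin.castSucc_le_succ j)
    rcases lt_trichotomy j k with hjk | rfl | hkj
    · have hs : s ⊆ Ici (b j.succ) := Icc_subset_Ici_self.trans
        (Ici_subset_Ici.2 (hb (Fin.succ_le_castSucc_iff.2 hjk)))
      simpa [hjk.ne'] using (hasSlopeOn_window_of_subset_Ici hj hs).const_mul (a j.succ)
    · simpa using (hasSlopeOn_window_of_subset_Icc subset_rfl).const_mul (a j.succ)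
    · have hs : s ⊆ Iic (b j.castSucc) := Icc_subset_Iic_self.trans
        (Iic_subset_Iic.2 (hb (Fin.succ_le_castSucc_iff.2 hkj)))
      simpa [hkj.ne] using (hasSlopeOn_window_of_subset_Iic hj hs).const_mul (a j.succ)
  have h₀ : s ⊆ Ici (b 0) := Icc_subset_Ici_self.trans (Ici_subset_Ici.2 (hb (Fin.zero_le _)))
  have h₁ : s ⊆ Iic (b (Fin.last K)) :=
    Icc_subset_Iic_self.trans (Iic_subset_Iic.2 (hb (Fin.le_last _)))
  simpa using hasSlopeOn_of_hinge_slopes a (hasSlopeOn_hinge_of_subset_Ici h₀)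
    (HasSlopeOn.sum Finset.univ fun j _ => window j) (hasSlopeOn_hinge_of_subset_Iic h₁)

end aplConstruction

theorem apl_explicit_construction_general (K : ℕ) (b a : Fin (K+1) → ℝ) (hb : StrictMono b)
    (g : ℝ → ℝ)
    (hleft : ∃ q : ℝ, ∀ x ≤ b 0, g x = a 0 * x + q)
    (hmid : ∀ k : Fin K, ∃ q : ℝ,
      ∀ x ∈ Set.Icc (b k.castSucc) (b k.succ), g x = a k.succ * x + q)
    (hright : ∀ x, b (Fin.last K) ≤ x → g x = x) :
    ∀ x, g x =
      -(a 0) * max 0 (-x + b 0) +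
      (∑ k : Fin K, a k.succ * (max 0 (-x + b k.castSucc) - max 0 (-x + b k.succ))) -
      max 0 (-x) + max 0 x + max 0 (-x + b (Fin.last K)) := by
  have hmono := hb.monotone
  have eqOn_Ici : ∀ j, EqOn g (aplConstruction K b a) (Ici (b j)) := by
    intro j
    induction j using Fin.reverseInduction with
    | last =>
      exact fun x hx => (hright x hx).trans (aplConstruction.eq_self_of_le a hmono hx).symm
    | cast k ih =>
      obtain ⟨q, hq⟩ := hmid k
      have hk := hmono (Fin.castSucc_le_succ k)
      have eqOn_Icc := (HasSlopeOn.of_eqOn_affine hq).eqOn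
        (aplConstruction.hasSlopeOn_Icc a hmono k) (right_mem_Icc.2 hk) (ih self_mem_Ici)
      rw [← Icc_union_Ici_eq_Ici hk]
      exact eqOn_Icc.union ih
  obtain ⟨q, hq⟩ := hleft
  have eqOn_Iic := (HasSlopeOn.of_eqOn_affine hq).eqOn (aplConstruction.hasSlopeOn_Iic a hmono)
    self_mem_Iic (eqOn_Ici 0 self_mem_Ici)
  intro x
  rcases le_total x (b 0) with hx | hx
  exacts [eqOn_Iic hx, eqOn_Ici 0 hx]

/-- the explicit construction (Equation 2) reproduces any continuous
piecewise-linear g with boundary points b^0 < ... < b^K, slope a^k on the k-th region,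
and g(x) = x to the right of b^K. -/
theorem apl_explicit_construction (K : ℕ) (b a : Fin (K+1) → ℝ) (hb : StrictMono b)
    (g : ℝ → ℝ) (hc : Continuous g)
    (hleft : ∃ q : ℝ, ∀ x ≤ b 0, g x = a 0 * x + q)
    (hmid : ∀ k : Fin K, ∃ q : ℝ,
      ∀ x ∈ Set.Icc (b k.castSucc) (b k.succ), g x = a k.succ * x + q)
    (hright : ∀ x, b (Fin.last K) ≤ x → g x = x) :
    ∀ x, g x =
      -(a 0) * max 0 (-x + b 0) +
      (∑ k : Fin K, a k.succ * (max 0 (-x + b k.castSucc) - max 0 (-x + b k.succ))) -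
      max 0 (-x) + max 0 x + max 0 (-x + b (Fin.last K)) :=
  apl_explicit_construction_general K b a hb g hleft hmid hright
end
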